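/- arXiv:2504.00346 — 7 statements merged into one kernel-verified Lean document; each statement's English description precedes it below -/
import Mathlib

section
/- Let L be a finite nonempty set, let Σ be any type, let δ ∈ [0,1) and let C be a real number with C > √δ. Let F : L → Σ be a function and let 𝓕 be a finite set of functions from L to Σ such that (i) any two distinct f, g ∈ 𝓕 agree on at most δ·|L| points of L, and (ii) every f ∈ 𝓕 agrees with F on at least C·|L| points of L. Then |𝓕| ≤ C/(C² − δ). -/
/-!
Let `A f ⊆ L` be the set where `f ∈ 𝓕` agrees with `F`, and let `N x` count the sets `A f`
containing `x`. The first moment `∑ N` is the total agreement `S ≥ m C n`, while the second moment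
`∑ N²` counts pairs and is at most `S + m (m - 1) δ n`, since `A f ∩ A g` lies in the agreement
set of `f` and `g`. Cauchy–Schwarz `S² ≤ n ∑ N²` then forces `m (C² - δ) ≤ C - δ`: this is
Corrádi's lemma for set systems with large sets and small pairwise intersections.
-/

open Finset

namespace Finset

variable {ι α : Type*} [DecidableEq α]

theorem sum_sum_card_inter_le [DecidableEq ι] (s : Finset ι) (A : ι → Finset α) {k : ℝ}
    (hk : ∀ i ∈ s, ∀ j ∈ s, i ≠ j → (#(A i ∩ A j) : ℝ) ≤ k) :
    ∑ i ∈ s, ∑ j ∈ s, (#(A i ∩ A j) : ℝ) ≤ ∑ i ∈ s, (#(A i) : ℝ) + #s * (#s - 1) * k := by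
  have hrow : ∀ i ∈ s, ∑ j ∈ s, (#(A i ∩ A j) : ℝ) ≤ #(A i) + (#s - 1) * k := by
    intro i hi
    rw [← add_sum_erase _ _ hi, inter_self]
    gcongr
    calc ∑ j ∈ s.erase i, (#(A i ∩ A j) : ℝ)
        ≤ ∑ j ∈ s.erase i, k :=
          sum_le_sum fun j hj => hk i hi j (mem_of_mem_erase hj) (ne_of_mem_erase hj).symm
      _ = (#s - 1) * k := by
          rw [sum_const, card_erase_of_mem hi, nsmul_eq_mul,
            Nat.cast_pred (card_pos.2 ⟨i, hi⟩)]
  calc ∑ i ∈ s, ∑ j ∈ s, (#(A i ∩ A j) : ℝ)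
      ≤ ∑ i ∈ s, ((#(A i) : ℝ) + (#s - 1) * k) := sum_le_sum hrow
    _ = ∑ i ∈ s, (#(A i) : ℝ) + #s * (#s - 1) * k := by
        rw [sum_add_distrib, sum_const, nsmul_eq_mul]; ring

variable [Fintype α]

theorem sum_card_filter_mem (s : Finset ι) (A : ι → Finset α) :
    ∑ x, #{i ∈ s | x ∈ A i} = ∑ i ∈ s, #(A i) := by
  simp_rw [card_filter]
  rw [sum_comm]
  simp

theorem sum_card_filter_mem_sq (s : Finset ι) (A : ι → Finset α) :
    ∑ x, #{i ∈ s | x ∈ A i} ^ 2 = ∑ i ∈ s, ∑ j ∈ s, #(A i ∩ A j) := by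
  simp_rw [card_filter, sq, sum_mul_sum, ite_zero_mul_ite_zero, mul_one, ← mem_inter]
  rw [sum_comm]
  refine sum_congr rfl fun i _ => ?_
  rw [sum_comm]
  refine sum_congr rfl fun j _ => ?_
  rw [sum_boole, Nat.cast_id, filter_mem_eq_inter, univ_inter]

theorem sq_sum_card_le_card_mul_sum_sum_card_inter (s : Finset ι) (A : ι → Finset α) :
    (∑ i ∈ s, (#(A i) : ℝ)) ^ 2 ≤ Fintype.card α * ∑ i ∈ s, ∑ j ∈ s, (#(A i ∩ A j) : ℝ) := by
  have hfirst : ∑ i ∈ s, (#(A i) : ℝ) = ∑ x, (#{i ∈ s | x ∈ A i} : ℝ) := by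
    exact_mod_cast (sum_card_filter_mem s A).symm
  have hsecond : ∑ i ∈ s, ∑ j ∈ s, (#(A i ∩ A j) : ℝ) = ∑ x, (#{i ∈ s | x ∈ A i} : ℝ) ^ 2 := by
    exact_mod_cast (sum_card_filter_mem_sq s A).symm
  rw [hfirst, hsecond, ← card_univ]
  exact sq_sum_le_card_mul_sum_sq

theorem card_mul_sq_sub_le_of_card_inter_le [DecidableEq ι] {s : Finset ι} (hs : s.Nonempty)
    (A : ι → Finset α) {r k : ℝ} (hr : 0 < r) (hk : 0 ≤ k) (hA : ∀ i ∈ s, r ≤ #(A i))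
    (hAA : ∀ i ∈ s, ∀ j ∈ s, i ≠ j → (#(A i ∩ A j) : ℝ) ≤ k) :
    #s * (r ^ 2 - Fintype.card α * k) ≤ Fintype.card α * (r - k) := by
  set n : ℝ := (Fintype.card α : ℝ)
  set m : ℝ := (#s : ℝ)
  set S : ℝ := ∑ i ∈ s, (#(A i) : ℝ)
  have hm : 1 ≤ m := Nat.one_le_cast.2 hs.card_pos
  have hn : 0 ≤ n := Nat.cast_nonneg _
  have hS : m * r ≤ S := by simpa using card_nsmul_le_sum s _ r hA
  have hSpos : 0 < S := lt_of_lt_of_le (by positivity) hS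
  have hS2 : S ^ 2 ≤ n * (S + m * (m - 1) * k) :=
    (sq_sum_card_le_card_mul_sum_sum_card_inter s A).trans
      (mul_le_mul_of_nonneg_left (sum_sum_card_inter_le s A hAA) hn)
  have hrS : r * S ≤ n * r + n * (m - 1) * k := by
    refine le_of_mul_le_mul_right ?_ hSpos
    have hnk : 0 ≤ n * (m - 1) * k := by have := sub_nonneg.2 hm; positivity
    calc r * S * S = r * S ^ 2 := by ring
      _ ≤ r * (n * (S + m * (m - 1) * k)) := mul_le_mul_of_nonneg_left hS2 hr.le
      _ = n * r * S + n * (m - 1) * k * (m * r) := by ring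
      _ ≤ n * r * S + n * (m - 1) * k * S := by gcongr
      _ = (n * r + n * (m - 1) * k) * S := by ring
  nlinarith [mul_le_mul_of_nonneg_left hS hr.le]

end Finset

theorem list_decoding_general {L Alph : Type*} [Fintype L] [Nonempty L]
    (δ C : ℝ) (hδ0 : 0 ≤ δ) (hC : Real.sqrt δ < C)
    (F : L → Alph) (𝓕 : Finset (L → Alph))
    (hpair : ∀ f ∈ 𝓕, ∀ g ∈ 𝓕, f ≠ g →
      (Nat.card {x : L // f x = g x} : ℝ) ≤ δ * Fintype.card L)
    (hagree : ∀ f ∈ 𝓕, C * Fintype.card L ≤ (Nat.card {x : L // f x = F x} : ℝ)) :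
    (𝓕.card : ℝ) ≤ C / (C ^ 2 - δ) := by
  classical
  have hC0 : 0 < C := (Real.sqrt_nonneg δ).trans_lt hC
  have hδC : 0 < C ^ 2 - δ := by nlinarith [Real.sq_sqrt hδ0, Real.sqrt_nonneg δ]
  rcases 𝓕.eq_empty_or_nonempty with rfl | h𝓕
  · simpa using div_nonneg hC0.le hδC.le
  have hn : (0 : ℝ) < Fintype.card L := by exact_mod_cast Fintype.card_pos
  have hcard (f g : L → Alph) : Nat.card {x : L // f x = g x} = #{x | f x = g x} := by
    rw [Nat.card_eq_fintype_card, Fintype.card_subtype]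
  have hbound := card_mul_sq_sub_le_of_card_inter_le h𝓕 (fun f => {x | f x = F x})
    (mul_pos hC0 hn) (mul_nonneg hδ0 hn.le) (fun f hf => by rw [← hcard]; exact hagree f hf)
    fun f hf g hg hfg => by
      refine le_trans ?_ (hcard f g ▸ hpair f hf g hg hfg)
      gcongr
      intro x hx
      simp only [mem_inter, mem_filter, mem_univ, true_and] at hx ⊢
      exact hx.1.trans hx.2.symm
  have hm : (#𝓕 : ℝ) * (C ^ 2 - δ) ≤ C - δ := by
    refine le_of_mul_le_mul_left ?_ (pow_pos hn 2)
    linear_combination hbound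
  rw [le_div_iff₀ hδC]
  linarith

/-- List decoding bound (Blinovsky-style): if all pairwise agreements in `𝓕` are at most
`δ·|L|` and every member of `𝓕` agrees with `F` on at least `C·|L|` points, with `C > √δ`,
then `|𝓕| ≤ C / (C² − δ)`. -/
theorem list_decoding {L Alph : Type*} [Fintype L] [Nonempty L]
    (δ C : ℝ) (hδ0 : 0 ≤ δ) (hδ1 : δ < 1) (hC : Real.sqrt δ < C)
    (F : L → Alph) (𝓕 : Finset (L → Alph))
    (hpair : ∀ f ∈ 𝓕, ∀ g ∈ 𝓕, f ≠ g →
      (Nat.card {x : L // f x = g x} : ℝ) ≤ δ * Fintype.card L)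
    (hagree : ∀ f ∈ 𝓕, C * Fintype.card L ≤ (Nat.card {x : L // f x = F x} : ℝ)) :
    (𝓕.card : ℝ) ≤ C / (C ^ 2 - δ) :=
  list_decoding_general δ C hδ0 hC F 𝓕 hpair hagree
end

section
/- Let A and B be finite nonempty sets and let W : A × B → ℝ≥0 be a biregular weight function: there are positive reals d_A, d_B such that Σ_{b∈B} W(a,b) = d_A for every a ∈ A and Σ_{a∈A} W(a,b) = d_B for every b ∈ B. Define the adjacency operator T on functions by (TF)(b) = (1/d_B)·Σ_{a∈A} W(a,b)·F(a). Suppose λ ≥ 0 is such that for every F : A → ℝ with Σ_{a∈A} F(a) = 0 one has (1/|B|)·Σ_{b∈B} (TF)(b)² ≤ λ²·(1/|A|)·Σ_{a∈A} F(a)². Then for every nonempty S ⊆ A with |S|/|A| = ε and every G : B → ℝ with 0 ≤ G(b) ≤ 1 for all b, one has |(1/(|S|·d_A))·Σ_{a∈S} Σ_{b∈B} W(a,b)·G(b) − (1/|B|)·Σ_{b∈B} G(b)| ≤ λ/√ε. -/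
/-!
Let `F = 1_S - ε` be the centred indicator of `S`. Since `T` fixes constants and
`|S| d_A = ε |A| d_A = ε |B| d_B` by double counting, the sampling error equals
`⟨G, T F⟩ / (ε |B|)`, and Cauchy–Schwarz together with the spectral bound on `T F` gives
`⟨G, T F⟩² ≤ |B|² λ² ‖F‖² / |A| ≤ |B|² λ² ε`, because `‖F‖² = |S| (1 - ε) ≤ ε |A|`.
-/

open Finset

namespace SpectralSampling

variable {A B : Type*} [Fintype A]

noncomputable def adjAvg (W : A → B → ℝ) (dB : ℝ) (F : A → ℝ) (b : B) : ℝ :=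
  (1 / dB) * ∑ a, W a b * F a

noncomputable def centered (f : A → ℝ) (a : A) : ℝ :=
  f a - (∑ x, f x) / Fintype.card A

theorem sum_centered [Nonempty A] (f : A → ℝ) : ∑ a, centered f a = 0 := by
  have hA : (Fintype.card A : ℝ) ≠ 0 := by positivity
  simp only [centered, sum_sub_distrib, sum_const, card_univ, nsmul_eq_mul]
  field_simp
  ring

theorem sum_sq_centered_le (f : A → ℝ) : ∑ a, centered f a ^ 2 ≤ ∑ a, f a ^ 2 := by
  rcases isEmpty_or_nonempty A with hA | hA
  · simp
  have hn : (Fintype.card A : ℝ) ≠ 0 := by positivity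
  have hexpand : ∑ a, centered f a ^ 2 = ∑ a, f a ^ 2 - (∑ a, f a) ^ 2 / Fintype.card A := by
    simp only [centered, sub_sq, sum_add_distrib, sum_sub_distrib, ← sum_mul, ← mul_sum,
      sum_const, card_univ, nsmul_eq_mul]
    field_simp
    ring
  rw [hexpand]
  exact sub_le_self _ (by positivity)

theorem card_mul_eq_card_mul_of_biregular [Fintype B] {W : A → B → ℝ} {dA dB : ℝ}
    (hrow : ∀ a, ∑ b, W a b = dA) (hcol : ∀ b, ∑ a, W a b = dB) :
    Fintype.card A * dA = Fintype.card B * dB := by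
  have := sum_comm (s := univ) (t := univ) (f := W)
  simpa [hrow, hcol] using this

theorem adjAvg_centered {W : A → B → ℝ} {dB : ℝ} (hcol : ∀ b, ∑ a, W a b = dB) (hdB : dB ≠ 0)
    (f : A → ℝ) (b : B) :
    adjAvg W dB (centered f) b = adjAvg W dB f b - (∑ a, f a) / Fintype.card A := by
  simp only [adjAvg, centered, mul_sub, sum_sub_distrib, ← sum_mul, hcol]
  field_simp

theorem sum_mul_adjAvg_indicator [Fintype B] [DecidableEq A] (W : A → B → ℝ) (dB : ℝ)
    (S : Finset A) (G : B → ℝ) :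
    ∑ b, G b * adjAvg W dB (fun a => if a ∈ S then 1 else 0) b =
      (1 / dB) * ∑ a ∈ S, ∑ b, W a b * G b := by
  simp only [adjAvg, mul_ite, mul_one, mul_zero, sum_ite_mem, univ_inter, mul_sum]
  rw [sum_comm]
  exact sum_congr rfl fun _ _ => sum_congr rfl fun _ _ => by ring

theorem sq_sum_mul_le_card_mul_sum_sq [Fintype B] {G : B → ℝ} (hG : ∀ b, |G b| ≤ 1) (H : B → ℝ) :
    (∑ b, G b * H b) ^ 2 ≤ Fintype.card B * ∑ b, H b ^ 2 := by
  have hG2 : ∑ b, G b ^ 2 ≤ Fintype.card B := by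
    simpa using sum_le_sum fun b (_ : b ∈ univ) => (sq_le_one_iff_abs_le_one (G b)).2 (hG b)
  exact (sum_mul_sq_le_sq_mul_sq _ _ _).trans
    (mul_le_mul_of_nonneg_right hG2 (by positivity))

theorem sq_sum_mul_adjAvg_le [Fintype B] [Nonempty B] {W : A → B → ℝ} {dB lam : ℝ}
    (hspec : ∀ F : A → ℝ, (∑ a, F a) = 0 →
      (1 / (Fintype.card B : ℝ)) * ∑ b, adjAvg W dB F b ^ 2 ≤
        lam ^ 2 * ((1 / (Fintype.card A : ℝ)) * ∑ a, F a ^ 2))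
    {F : A → ℝ} (hF : ∑ a, F a = 0) {G : B → ℝ} (hG : ∀ b, |G b| ≤ 1) :
    (∑ b, G b * adjAvg W dB F b) ^ 2 ≤
      (Fintype.card B : ℝ) ^ 2 * (lam ^ 2 * ((1 / (Fintype.card A : ℝ)) * ∑ a, F a ^ 2)) := by
  have hB : (0 : ℝ) < Fintype.card B := by positivity
  calc (∑ b, G b * adjAvg W dB F b) ^ 2
      ≤ Fintype.card B * ∑ b, adjAvg W dB F b ^ 2 := sq_sum_mul_le_card_mul_sum_sq hG _
    _ = (Fintype.card B : ℝ) ^ 2 * ((1 / Fintype.card B) * ∑ b, adjAvg W dB F b ^ 2) := by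
        field_simp
    _ ≤ _ := mul_le_mul_of_nonneg_left (hspec F hF) (by positivity)

theorem sampling_error_eq [Fintype B] [Nonempty B] [DecidableEq A] {W : A → B → ℝ} {dA dB : ℝ}
    (hdB : dB ≠ 0) (hrow : ∀ a, ∑ b, W a b = dA) (hcol : ∀ b, ∑ a, W a b = dB)
    {S : Finset A} (hS : S.Nonempty) (G : B → ℝ) :
    (1 / ((S.card : ℝ) * dA)) * ∑ a ∈ S, ∑ b, W a b * G b -
        (1 / (Fintype.card B : ℝ)) * ∑ b, G b =
      (∑ b, G b * adjAvg W dB (centered fun a => if a ∈ S then 1 else 0) b) /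
        ((S.card : ℝ) / Fintype.card A * Fintype.card B) := by
  have : Nonempty A := ⟨hS.choose⟩
  have hSc : (S.card : ℝ) ≠ 0 := by simpa using hS.ne_empty
  have hA : (Fintype.card A : ℝ) ≠ 0 := by positivity
  have hB : (Fintype.card B : ℝ) ≠ 0 := by positivity
  have hcard := card_mul_eq_card_mul_of_biregular hrow hcol
  have hdA : dA ≠ 0 := by
    rintro rfl
    simp_all
  have hpair : ∑ b, G b * adjAvg W dB (centered fun a => if a ∈ S then 1 else 0) b =
      (1 / dB) * ∑ a ∈ S, ∑ b, W a b * G b - S.card / Fintype.card A * ∑ b, G b := by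
    simp only [adjAvg_centered hcol hdB, sum_boole, filter_mem_eq_inter, univ_inter,
      mul_sub, sum_sub_distrib, sum_mul_adjAvg_indicator, ← sum_mul]
    ring
  rw [hpair]
  field_simp
  linear_combination (-∑ a ∈ S, ∑ b, W a b * G b) * hcard

end SpectralSampling

open Finset SpectralSampling

theorem spectral_sampling_general {A B : Type*} [Fintype A] [Fintype B] [Nonempty A] [Nonempty B]
    (W : A → B → ℝ)
    (dA dB : ℝ) (hdB : 0 < dB)
    (hrow : ∀ a, ∑ b, W a b = dA) (hcol : ∀ b, ∑ a, W a b = dB)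
    (lam : ℝ) (hlam : 0 ≤ lam)
    (hspec : ∀ F : A → ℝ, (∑ a, F a) = 0 →
      (1 / (Fintype.card B : ℝ)) * ∑ b, ((1 / dB) * ∑ a, W a b * F a) ^ 2 ≤
        lam ^ 2 * ((1 / (Fintype.card A : ℝ)) * ∑ a, F a ^ 2))
    (S : Finset A) (hS : S.Nonempty) (ε : ℝ)
    (hε : (S.card : ℝ) / (Fintype.card A : ℝ) = ε)
    (G : B → ℝ) (hG0 : ∀ b, 0 ≤ G b) (hG1 : ∀ b, G b ≤ 1) :
    |(1 / ((S.card : ℝ) * dA)) * ∑ a ∈ S, ∑ b, W a b * G b -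
        (1 / (Fintype.card B : ℝ)) * ∑ b, G b| ≤ lam / Real.sqrt ε := by
  classical
  set F := centered fun a => if a ∈ S then (1 : ℝ) else 0
  have hε0 : 0 < ε := hε ▸ by positivity
  have hF : (1 / (Fintype.card A : ℝ)) * ∑ a, F a ^ 2 ≤ ε := by
    have hF2 : ∑ a, F a ^ 2 ≤ S.card := by
      simpa [ite_pow] using sum_sq_centered_le fun a => if a ∈ S then (1 : ℝ) else 0
    rw [← hε, one_div_mul_eq_div]
    gcongr
  have hG : ∀ b, |G b| ≤ 1 := fun b => abs_le.2 ⟨by linarith [hG0 b], hG1 b⟩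
  have hbound := sq_sum_mul_adjAvg_le hspec (sum_centered _) hG (F := F)
  rw [sampling_error_eq hdB.ne' hrow hcol hS, hε]
  refine abs_le_of_sq_le_sq ?_ (by positivity)
  rw [div_pow, div_pow, Real.sq_sqrt hε0.le]
  calc _ ≤ (Fintype.card B : ℝ) ^ 2 * (lam ^ 2 * ε) / (ε * Fintype.card B) ^ 2 := by
        gcongr
        exact hbound.trans (by gcongr)
    _ = lam ^ 2 / ε := by field_simp

/-- Spectral sampling lemma for a biregular weighted bipartite graph. -/
theorem spectral_sampling {A B : Type*} [Fintype A] [Fintype B] [Nonempty A] [Nonempty B]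
    (W : A → B → ℝ) (hW : ∀ a b, 0 ≤ W a b)
    (dA dB : ℝ) (hdA : 0 < dA) (hdB : 0 < dB)
    (hrow : ∀ a, ∑ b, W a b = dA) (hcol : ∀ b, ∑ a, W a b = dB)
    (lam : ℝ) (hlam : 0 ≤ lam)
    (hspec : ∀ F : A → ℝ, (∑ a, F a) = 0 →
      (1 / (Fintype.card B : ℝ)) * ∑ b, ((1 / dB) * ∑ a, W a b * F a) ^ 2 ≤
        lam ^ 2 * ((1 / (Fintype.card A : ℝ)) * ∑ a, F a ^ 2))
    (S : Finset A) (hS : S.Nonempty) (ε : ℝ)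
    (hε : (S.card : ℝ) / (Fintype.card A : ℝ) = ε)
    (G : B → ℝ) (hG0 : ∀ b, 0 ≤ G b) (hG1 : ∀ b, G b ≤ 1) :
    |(1 / ((S.card : ℝ) * dA)) * ∑ a ∈ S, ∑ b, W a b * G b -
        (1 / (Fintype.card B : ℝ)) * ∑ b, G b| ≤ lam / Real.sqrt ε :=
  spectral_sampling_general W dA dB hdB hrow hcol lam hlam hspec S hS ε hε G hG0 hG1
end

section
/- Let F be a field, let m ≥ 1, let f ∈ F[x_1,…,x_m], let A_1,…,A_m ⊆ F be finite nonempty sets, let h : A_1 × ⋯ × A_m → F be a function, and let ĥ ∈ F[x_1,…,x_m] be the unique polynomial with deg_{x_i} ĥ ≤ |A_i| − 1 for every i that agrees with h on A_1 × ⋯ × A_m. Then f(a) = h(a) for all a ∈ A_1 × ⋯ × A_m if and only if there exist polynomials g_1,…,g_m ∈ F[x_1,…,x_m] such that f = Σ_{i=1}^m V_{A_i}·g_i + ĥ, where V_{A_i}(x_i) = ∏_{α∈A_i}(x_i − α). Furthermore, if (d_1,…,d_m) are integers with d_i ≥ |A_i| for every i and deg_{x_i} f ≤ d_i for every i, then the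 g_i can be chosen so that g_i has individual degrees at most (d_1,…,d_i − |A_i|,…,d_m). -/
noncomputable def vanishingMv {F : Type*} [Field F] {m : ℕ} (A : Fin m → Finset F)
    (i : Fin m) : MvPolynomial (Fin m) F :=
  ∏ α ∈ A i, (MvPolynomial.X i - MvPolynomial.C α)

/-! Dividing by the monic polynomials `V_{A_i}(x_i)` one variable at a time (monomial by
monomial, as in one-variable division) writes `f = Σ V_{A_i} g_i + r` with `deg_{x_i} r < |A_i|`
for every `i`, without raising any individual degree. As every `V_{A_i}` vanishes on the grid,
`r - ĥ` vanishes there too; its individual degrees are below `|A_i|`, so it is zero by the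
Combinatorial Nullstellensatz. -/

open MvPolynomial
open scoped Polynomial

namespace MvPolynomial

variable {R σ : Type*} [CommRing R]

lemma degreeOf_monomial_le (s : σ →₀ ℕ) (c : R) (j : σ) : (monomial s c).degreeOf j ≤ s j := by
  rcases eq_or_ne c 0 with rfl | hc
  · simp
  · rw [degreeOf_monomial_eq s j hc]

lemma degreeOf_aeval_X_le [DecidableEq σ] (P : R[X]) (i j : σ) :
    (Polynomial.aeval (X i : MvPolynomial σ R) P).degreeOf j ≤
      if j = i then P.natDegree else 0 := by
  rw [Polynomial.aeval_eq_sum_range]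
  refine (degreeOf_sum_le _ _ _).trans (Finset.sup_le fun k hk => ?_)
  rw [X_pow_eq_monomial, smul_monomial]
  refine (degreeOf_monomial_le _ _ _).trans ?_
  rw [Finsupp.single_apply]
  split_ifs with h1 h2 h2
  · exact Nat.lt_succ_iff.mp (Finset.mem_range.mp hk)
  · exact absurd h1.symm h2
  · exact absurd h2.symm h1
  · rfl

lemma degreeOf_monomial_erase_mul_aeval_X_le [DecidableEq σ] (s : σ →₀ ℕ) (c : R) (P : R[X])
    (i j : σ) :
    (monomial (s.erase i) c * Polynomial.aeval (X i) P).degreeOf j ≤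
      if j = i then P.natDegree else s j := by
  refine (degreeOf_mul_le _ _ _).trans ?_
  have hmon := degreeOf_monomial_le (s.erase i) c j
  have hP := degreeOf_aeval_X_le P i j
  split_ifs at hP ⊢ with hji
  · subst hji
    rw [Finsupp.erase_same] at hmon
    omega
  · rw [Finsupp.erase_ne hji] at hmon
    omega

section Division

variable [DecidableEq σ]

def HasBoundedDivision (V : R[X]) (i : σ) (d : σ → ℕ) (p : MvPolynomial σ R) : Prop :=
  ∃ q r, p = Polynomial.aeval (X i) V * q + r ∧
    (∀ j, q.degreeOf j ≤ if j = i then d j - V.natDegree else d j) ∧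
    r.degreeOf i < V.natDegree ∧ ∀ j, r.degreeOf j ≤ d j

variable {V : R[X]} {i : σ} {d : σ → ℕ}

lemma hasBoundedDivision_zero (hV0 : 0 < V.natDegree) : HasBoundedDivision V i d 0 :=
  ⟨0, 0, by simp, by simp, by simpa using hV0, by simp⟩

lemma HasBoundedDivision.add {p₁ p₂ : MvPolynomial σ R} (h₁ : HasBoundedDivision V i d p₁)
    (h₂ : HasBoundedDivision V i d p₂) : HasBoundedDivision V i d (p₁ + p₂) := by
  obtain ⟨q₁, r₁, rfl, hq₁, hr₁i, hr₁⟩ := h₁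
  obtain ⟨q₂, r₂, rfl, hq₂, hr₂i, hr₂⟩ := h₂
  refine ⟨q₁ + q₂, r₁ + r₂, by ring, fun j => ?_, ?_, fun j => ?_⟩
  · exact (degreeOf_add_le _ _ _).trans (max_le (hq₁ j) (hq₂ j))
  · exact (degreeOf_add_le _ _ _).trans_lt (max_lt hr₁i hr₂i)
  · exact (degreeOf_add_le _ _ _).trans (max_le (hr₁ j) (hr₂ j))

lemma hasBoundedDivision_monomial (hV : V.Monic) (hV0 : 0 < V.natDegree)
    {s : σ →₀ ℕ} (hs : ∀ j, s j ≤ d j) (c : R) : HasBoundedDivision V i d (monomial s c) := by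
  set Q := (Polynomial.X ^ s i : R[X]) /ₘ V
  set Rm := (Polynomial.X ^ s i : R[X]) %ₘ V
  have hQ : Q.natDegree ≤ s i - V.natDegree := by
    rw [Polynomial.natDegree_divByMonic _ hV]
    exact Nat.sub_le_sub_right (Polynomial.natDegree_X_pow_le _) _
  have hRm : Rm.natDegree < V.natDegree :=
    Polynomial.natDegree_modByMonic_lt _ hV fun h => by simp [h] at hV0
  have hRm_le : Rm.natDegree ≤ s i :=
    Polynomial.natDegree_modByMonic_le_left.trans (Polynomial.natDegree_X_pow_le _)
  refine ⟨monomial (s.erase i) c * Polynomial.aeval (X i) Q,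
    monomial (s.erase i) c * Polynomial.aeval (X i) Rm, ?_, fun j => ?_, ?_, fun j => ?_⟩
  · have hXpow : (X i : MvPolynomial σ R) ^ s i =
        Polynomial.aeval (X i) V * Polynomial.aeval (X i) Q + Polynomial.aeval (X i) Rm := by
      rw [← map_mul, ← map_add, add_comm, Polynomial.modByMonic_add_div, map_pow,
        Polynomial.aeval_X]
    rw [← Finsupp.single_add_erase i s, monomial_single_add, Finsupp.single_add_erase, hXpow]
    ring
  · refine (degreeOf_monomial_erase_mul_aeval_X_le s c Q i j).trans ?_
    split_ifs with hji
    · subst hji; have := hs j; omega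
    · exact hs j
  · have := degreeOf_monomial_erase_mul_aeval_X_le s c Rm i i
    rw [if_pos rfl] at this
    exact this.trans_lt hRm
  · refine (degreeOf_monomial_erase_mul_aeval_X_le s c Rm i j).trans ?_
    split_ifs with hji
    · subst hji; exact hRm_le.trans (hs j)
    · exact hs j

lemma hasBoundedDivision_of_degreeOf_le (hV : V.Monic) (hV0 : 0 < V.natDegree)
    {p : MvPolynomial σ R} (hp : ∀ j, p.degreeOf j ≤ d j) : HasBoundedDivision V i d p := by
  rw [p.as_sum]
  exact Finset.sum_induction _ _ (fun _ _ => HasBoundedDivision.add) (hasBoundedDivision_zero hV0)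
    fun s hs => hasBoundedDivision_monomial hV hV0
      (fun j => (le_degreeOf_of_mem_support j hs).trans (hp j)) _

lemma exists_eq_sum_aeval_X_mul_add {V : σ → R[X]} (hV : ∀ i, (V i).Monic)
    (hV0 : ∀ i, 0 < (V i).natDegree) (s : Finset σ) {p : MvPolynomial σ R}
    (hp : ∀ j, p.degreeOf j ≤ d j) :
    ∃ (g : σ → MvPolynomial σ R) (r : MvPolynomial σ R),
      p = ∑ i ∈ s, Polynomial.aeval (X i) (V i) * g i + r ∧
      (∀ i ∈ s, ∀ j, (g i).degreeOf j ≤ if j = i then d j - (V j).natDegree else d j) ∧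
      (∀ i ∈ s, r.degreeOf i < (V i).natDegree) ∧ ∀ j, r.degreeOf j ≤ d j := by
  induction s using Finset.induction_on with
  | empty => exact ⟨0, p, by simp, by simp, by simp, hp⟩
  | insert i s hi ih =>
    obtain ⟨g, r, rfl, hg, hrs, hr⟩ := ih
    -- Bounding by the degrees of `r` itself keeps the new remainder reduced in `s`.
    obtain ⟨q, r', rfl, hq, hr'i, hr'⟩ := hasBoundedDivision_of_degreeOf_le (i := i) (hV i)
      (hV0 i) (d := (r.degreeOf ·)) fun _ => le_rfl
    refine ⟨Function.update g i q, r', ?_, ?_, ?_, fun j => (hr' j).trans (hr j)⟩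
    · rw [Finset.sum_insert hi, Function.update_self,
        Finset.sum_congr rfl fun j hj =>
          congrArg (_ * ·) (Function.update_of_ne (ne_of_mem_of_not_mem hj hi) q g)]
      ring
    · simp only [Finset.mem_insert, forall_eq_or_imp, Function.update_self]
      refine ⟨fun j => (hq j).trans ?_, fun i' hi' => ?_⟩
      · split_ifs with hji
        · subst hji; exact Nat.sub_le_sub_right (hr j) _
        · exact hr j
      · rw [Function.update_of_ne (ne_of_mem_of_not_mem hi' hi)]
        exact hg i' hi'
    · simp only [Finset.mem_insert, forall_eq_or_imp]
      exact ⟨hr'i, fun i' hi' => (hr' i').trans_lt (hrs i' hi')⟩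

end Division

end MvPolynomial

section Grid

variable {F : Type*} [Field F] {m : ℕ} (A : Fin m → Finset F)

lemma vanishingMv_eq_aeval_nodal (i : Fin m) :
    vanishingMv A i = Polynomial.aeval (X i) (Lagrange.nodal (A i) id) := by
  simp [vanishingMv, Lagrange.nodal]

lemma eval_vanishingMv {i : Fin m} {a : Fin m → F} (ha : a i ∈ A i) :
    eval a (vanishingMv A i) = 0 := by
  rw [vanishingMv, map_prod]
  exact Finset.prod_eq_zero ha (by simp)

lemma exists_eq_sum_vanishingMv_mul_add (hA : ∀ i, (A i).Nonempty)
    {f hhat : MvPolynomial (Fin m) F} (hhat_deg : ∀ i, hhat.degreeOf i ≤ (A i).card - 1)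
    (heval : ∀ a : Fin m → F, (∀ i, a i ∈ A i) → eval a f = eval a hhat)
    {d : Fin m → ℕ} (hfd : ∀ i, f.degreeOf i ≤ d i) :
    ∃ g : Fin m → MvPolynomial (Fin m) F, f = (∑ i, vanishingMv A i * g i) + hhat ∧
      ∀ i j, (g i).degreeOf j ≤ if j = i then d j - (A j).card else d j := by
  have hcard i : 0 < (A i).card := (hA i).card_pos
  obtain ⟨g, r, hf, hg, hr, -⟩ := exists_eq_sum_aeval_X_mul_add
    (fun i => Lagrange.nodal_monic (s := A i) (v := id))
    (fun i => by simpa [Lagrange.natDegree_nodal] using hcard i) Finset.univ hfd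
  simp only [Lagrange.natDegree_nodal, ← vanishingMv_eq_aeval_nodal, Finset.mem_univ,
    forall_const] at hf hg hr
  have hr_eval a (ha : ∀ i, a i ∈ A i) : eval a r = eval a f := by
    simp [hf, eval_vanishingMv A (ha _)]
  have hr_hat : r - hhat = 0 := by
    refine eq_zero_of_eval_zero_at_prod_finset _ A (fun i => ?_) fun a ha => ?_
    · refine (degreeOf_sub_le _ _ _).trans_lt (max_lt (hr i) ?_)
      have := hhat_deg i
      have := hcard i
      omega
    · rw [map_sub, hr_eval a ha, heval a ha, sub_self]
  exact ⟨g, by rw [hf, sub_eq_zero.mp hr_hat], hg⟩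

end Grid

theorem mv_side_condition_decomposition_general {F : Type*} [Field F] {m : ℕ}
    (f : MvPolynomial (Fin m) F) (A : Fin m → Finset F) (hA : ∀ i, (A i).Nonempty)
    (h : (Fin m → F) → F) (hhat : MvPolynomial (Fin m) F)
    (hhat_deg : ∀ i, hhat.degreeOf i ≤ (A i).card - 1)
    (hhat_agree : ∀ a : Fin m → F, (∀ i, a i ∈ A i) → MvPolynomial.eval a hhat = h a) :
    ((∀ a : Fin m → F, (∀ i, a i ∈ A i) → MvPolynomial.eval a f = h a) ↔
      ∃ g : Fin m → MvPolynomial (Fin m) F, f = (∑ i, vanishingMv A i * g i) + hhat) ∧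
    ∀ d : Fin m → ℕ, (∀ i, (A i).card ≤ d i) → (∀ i, f.degreeOf i ≤ d i) →
      (∀ a : Fin m → F, (∀ i, a i ∈ A i) → MvPolynomial.eval a f = h a) →
      ∃ g : Fin m → MvPolynomial (Fin m) F,
        f = (∑ i, vanishingMv A i * g i) + hhat ∧
        ∀ i j, (g i).degreeOf j ≤ (if j = i then d j - (A j).card else d j) := by
  have decompose (d : Fin m → ℕ) (hfd : ∀ i, f.degreeOf i ≤ d i)
      (hfh : ∀ a : Fin m → F, (∀ i, a i ∈ A i) → eval a f = h a) :=
    exists_eq_sum_vanishingMv_mul_add A hA hhat_deg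
      (fun a ha => (hfh a ha).trans (hhat_agree a ha).symm) hfd
  refine ⟨⟨fun hfh => ?_, ?_⟩, fun d _ hfd hfh => decompose d hfd hfh⟩
  · obtain ⟨g, hg, -⟩ := decompose _ (fun _ => le_rfl) hfh
    exact ⟨g, hg⟩
  · rintro ⟨g, rfl⟩ a ha
    simp [eval_vanishingMv A (ha _), hhat_agree a ha]

/-- Multivariate side-condition decomposition lemma: `f` agrees with `h` on the grid
`A₁ × ⋯ × A_m` iff `f = Σᵢ V_{Aᵢ}·gᵢ + ĥ`; furthermore, under individual degree bounds
`deg_{xᵢ} f ≤ dᵢ` with `dᵢ ≥ |Aᵢ|`, the `gᵢ` can be chosen with individual degrees at most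
`(d₁,…,dᵢ − |Aᵢ|,…,d_m)`. -/
theorem mv_side_condition_decomposition {F : Type*} [Field F] {m : ℕ} (hm : 1 ≤ m)
    (f : MvPolynomial (Fin m) F) (A : Fin m → Finset F) (hA : ∀ i, (A i).Nonempty)
    (h : (Fin m → F) → F) (hhat : MvPolynomial (Fin m) F)
    (hhat_deg : ∀ i, hhat.degreeOf i ≤ (A i).card - 1)
    (hhat_agree : ∀ a : Fin m → F, (∀ i, a i ∈ A i) → MvPolynomial.eval a hhat = h a) :
    ((∀ a : Fin m → F, (∀ i, a i ∈ A i) → MvPolynomial.eval a f = h a) ↔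
      ∃ g : Fin m → MvPolynomial (Fin m) F, f = (∑ i, vanishingMv A i * g i) + hhat) ∧
    ∀ d : Fin m → ℕ, (∀ i, (A i).card ≤ d i) → (∀ i, f.degreeOf i ≤ d i) →
      (∀ a : Fin m → F, (∀ i, a i ∈ A i) → MvPolynomial.eval a f = h a) →
      ∃ g : Fin m → MvPolynomial (Fin m) F,
        f = (∑ i, vanishingMv A i * g i) + hhat ∧
        ∀ i j, (g i).degreeOf j ≤ (if j = i then d j - (A j).card else d j) :=
  mv_side_condition_decomposition_general f A hA h hhat hhat_deg hhat_agree
end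

section
/- Fix finite fields F_q ⊆ F_{q'} (F_q a subfield of F_{q'}). Let A ⊆ F_{q'} be a finite set, let h : A → F_{q'}, let d ≥ |A| be an integer, let ĥ ∈ F_{q'}[x] be the unique polynomial of degree ≤ |A| − 1 agreeing with h on A, and let h̃ = ĥ|_{F_q}. If f : F_q → F_{q'} lies in RS_{q'}[d, F_q | h], then there exists Fill : A → F_{q'} such that the function Quo₁(f − h̃, A, Fill) lies in RS_{q'}[d − |A|, F_q]. -/
namespace Paper

variable {Fq Fq' : Type*}

/-- `RS ι d`: functions `F_q → F_{q'}` that are restrictions (along the subfield embedding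
`ι`) of polynomials over `F_{q'}` of degree at most `d`. -/
def RS [Field Fq] [Field Fq'] (ι : Fq →+* Fq') (d : ℕ) : Set (Fq → Fq') :=
  {f | ∃ p : Polynomial Fq', p.natDegree ≤ d ∧ ∀ x, f x = Polynomial.eval (ι x) p}

/-- `RSside ι d A h`: members of `RS ι d` whose defining polynomial additionally takes the
value `h α` at every `α ∈ A`. -/
def RSside [Field Fq] [Field Fq'] (ι : Fq →+* Fq') (d : ℕ) (A : Finset Fq')
    (h : Fq' → Fq') : Set (Fq → Fq') :=
  {f | ∃ p : Polynomial Fq', p.natDegree ≤ d ∧ (∀ α ∈ A, Polynomial.eval α p = h α) ∧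
    ∀ x, f x = Polynomial.eval (ι x) p}

/-- The univariate quotient `Quo₁(f, A, Fill)(x) = f(x)/V_A(x)` for `x ∉ A`,
and `Fill(x)` for `x ∈ A`. -/
noncomputable def Quo1 [Field Fq] [Field Fq'] [DecidableEq Fq'] (ι : Fq →+* Fq')
    (f : Fq → Fq') (A : Finset Fq') (Fill : Fq' → Fq') : Fq → Fq' := fun x =>
  if ι x ∈ A then Fill (ι x) else f x / ∏ α ∈ A, (ι x - α)

/-! With `V_A = ∏ α ∈ A, (X - α)`, the remainder `p %ₘ V_A` has degree `< |A|` and agrees with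
`h` on `A`, so it is `ĥ` by uniqueness of interpolation. Hence `p - ĥ = V_A * (p /ₘ V_A)`, and the
quotient `p /ₘ V_A`, of degree `deg p - |A|`, restricts to `Quo₁(f - h̃, A, Fill)` once `Fill` is
taken to be its own values on `A`. -/

open Polynomial Lagrange

section Interpolation

variable {K : Type*} [Field K]

theorem modByMonic_nodal_eq_of_eval_eq {s : Finset K} {p r : K[X]} (hr : r.degree < s.card)
    (hpr : ∀ α ∈ s, p.eval α = r.eval α) : p %ₘ nodal s id = r := by
  refine eq_of_degrees_lt_of_eval_finset_eq s ?_ hr fun α hα => ?_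
  · rw [← degree_nodal (v := id)]
    exact degree_modByMonic_lt p nodal_monic
  · rw [← hpr α hα, ← coe_aeval_eq_eval, aeval_modByMonic_eq_self_of_root]
    exact eval_nodal_at_node (v := id) hα

theorem sub_eq_nodal_mul_divByMonic_of_eval_eq {s : Finset K} {p r : K[X]}
    (hr : r.degree < s.card) (hpr : ∀ α ∈ s, p.eval α = r.eval α) :
    p - r = nodal s id * (p /ₘ nodal s id) := by
  conv_lhs => rw [← modByMonic_add_div p (nodal s id), modByMonic_nodal_eq_of_eval_eq hr hpr]
  ring

end Interpolation

section Quotient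

variable [Field Fq] [Field Fq'] [DecidableEq Fq']

theorem quo1_nodal_mul (ι : Fq →+* Fq') (A : Finset Fq') (q : Fq'[X]) {f : Fq → Fq'}
    (hf : ∀ x, f x = (nodal A id * q).eval (ι x)) :
    Quo1 ι f A q.eval = fun x => q.eval (ι x) := by
  funext x
  unfold Quo1
  split_ifs with hx
  · rfl
  · have hV : (nodal A id).eval (ι x) ≠ 0 :=
      eval_nodal_not_at_node fun α hα h => hx (h ▸ hα)
    have hprod : (nodal A id).eval (ι x) = ∏ α ∈ A, (ι x - α) := eval_nodal
    rw [hf, eval_mul, ← hprod, mul_div_cancel_left₀ _ hV]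

end Quotient

theorem quo1_completeness_general [Field Fq] [Field Fq'] [DecidableEq Fq']
    (ι : Fq →+* Fq') (A : Finset Fq') (h : Fq' → Fq') (d : ℕ)
    (hhat : Polynomial Fq') (hhat_deg : hhat.degree < (A.card : WithBot ℕ))
    (hhat_agree : ∀ α ∈ A, Polynomial.eval α hhat = h α)
    (f : Fq → Fq') (hf : f ∈ RSside ι d A h) :
    ∃ Fill : Fq' → Fq',
      Quo1 ι (fun x => f x - Polynomial.eval (ι x) hhat) A Fill ∈ RS ι (d - A.card) := by
  obtain ⟨p, hp_deg, hp_agree, hfp⟩ := hf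
  set q := p /ₘ nodal A id
  have hfactor : p - hhat = nodal A id * q :=
    sub_eq_nodal_mul_divByMonic_of_eval_eq hhat_deg fun α hα => by
      rw [hp_agree α hα, hhat_agree α hα]
  refine ⟨q.eval, q, ?_, fun x => ?_⟩
  · rw [natDegree_divByMonic p nodal_monic, natDegree_nodal]
    exact Nat.sub_le_sub_right hp_deg _
  · rw [quo1_nodal_mul ι A q fun x => by rw [hfp, ← hfactor, eval_sub]]

/-- Univariate quotienting, completeness: if `f ∈ RS_{q'}[d, F_q | h]` then some `Fill`
makes `Quo₁(f − h̃, A, Fill)` a member of `RS_{q'}[d − |A|, F_q]`. -/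
theorem quo1_completeness [Field Fq] [Fintype Fq] [Field Fq'] [Fintype Fq'] [DecidableEq Fq']
    (ι : Fq →+* Fq') (A : Finset Fq') (h : Fq' → Fq') (d : ℕ) (hd : A.card ≤ d)
    (hhat : Polynomial Fq') (hhat_deg : hhat.degree < (A.card : WithBot ℕ))
    (hhat_agree : ∀ α ∈ A, Polynomial.eval α hhat = h α)
    (f : Fq → Fq') (hf : f ∈ RSside ι d A h) :
    ∃ Fill : Fq' → Fq',
      Quo1 ι (fun x => f x - Polynomial.eval (ι x) hhat) A Fill ∈ RS ι (d - A.card) :=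
  quo1_completeness_general ι A h d hhat hhat_deg hhat_agree f hf

end Paper
end

section
/- Fix finite fields F_q ⊆ F_{q'} (F_q a subfield of F_{q'}). Let A ⊆ F_{q'} be a finite set, let h : A → F_{q'}, let d ≥ |A| be an integer, let ĥ ∈ F_{q'}[x] be the unique polynomial of degree ≤ |A| − 1 agreeing with h on A, and let h̃ = ĥ|_{F_q}. Let f : F_q → F_{q'} and ε ≥ 0 satisfy agr(f, RS_{q'}[d, F_q | h]) ≤ ε. Then for every Fill : A → F_{q'}, one has agr(Quo₁(f − h̃, A, Fill), RS_{q'}[d − |A|, F_q]) ≤ ε + |A|/q. -/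
/-! If `Quo₁(f - h̃, A, Fill)` agrees with `p` (of degree `≤ d - |A|`) at a point `x ∉ A`, then `f`
agrees at `x` with `p · V_A + ĥ`, which has degree `≤ d` and takes the values `h` on `A`. Hence,
up to the at most `|A|` points of `F_q` lying in `A`, every agreement of the quotient with `p` is
an agreement of `f` with a codeword of `RS[d, F_q | h]`. -/

namespace Paper

variable {Fq Fq' : Type*}

/-- Fractional agreement between two functions on a finite domain. -/
noncomputable def agr {U V : Type*} [Fintype U] (f g : U → V) : ℝ :=
  (Nat.card {x : U // f x = g x} : ℝ) / Fintype.card U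

open Finset Polynomial

theorem agr_eq_card_filter_div {U V : Type*} [Fintype U] [DecidableEq V] (f g : U → V) :
    agr f g = (#{x | f x = g x} : ℝ) / Fintype.card U := by
  rw [agr, Nat.card_eq_fintype_card, Fintype.card_subtype]

theorem agr_le_agr_add_card_div {U V W : Type*} [Fintype U] (f₁ g₁ : U → V) (f₂ g₂ : U → W)
    (B : Finset U) (hB : ∀ x ∉ B, f₁ x = g₁ x → f₂ x = g₂ x) :
    agr f₁ g₁ ≤ agr f₂ g₂ + (#B : ℝ) / Fintype.card U := by
  classical
  have hsub : ({x | f₁ x = g₁ x} : Finset U) ⊆ ({x | f₂ x = g₂ x} : Finset U) ∪ B := by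
    intro x hx
    by_cases hxB : x ∈ B
    · exact mem_union_right _ hxB
    · simp only [mem_filter, mem_univ, true_and] at hx
      exact mem_union_left _ (by simpa using hB x hxB hx)
  have hcard : (#{x | f₁ x = g₁ x} : ℝ) ≤ #{x | f₂ x = g₂ x} + #B := by
    exact_mod_cast (card_le_card hsub).trans (card_union_le _ _)
  rw [agr_eq_card_filter_div, agr_eq_card_filter_div, ← add_div]
  gcongr

section

variable [Field Fq] [Field Fq']

theorem card_filter_mem_le [Fintype Fq] [DecidableEq Fq'] (ι : Fq →+* Fq') (A : Finset Fq') :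
    #({x | ι x ∈ A} : Finset Fq) ≤ #A :=
  card_le_card_of_injOn ι (fun x hx => by simpa using hx) ι.injective.injOn

theorem mem_RSside_nodal_mul_add (ι : Fq →+* Fq') (A : Finset Fq') (h : Fq' → Fq') {d : ℕ}
    (hd : #A ≤ d) {p hhat : Fq'[X]} (hp : p.natDegree ≤ d - #A)
    (hhat_deg : hhat.degree < #A) (hhat_agree : ∀ α ∈ A, hhat.eval α = h α) :
    (fun x => (p * Lagrange.nodal A id + hhat).eval (ι x)) ∈ RSside ι d A h := by
  refine ⟨_, ?_, fun α hα => ?_, fun _ => rfl⟩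
  · have hhat_natDeg : hhat.natDegree ≤ d :=
      natDegree_le_of_degree_le (hhat_deg.le.trans (by exact_mod_cast hd))
    refine (natDegree_add_le _ _).trans (max_le ((natDegree_mul_le).trans ?_) hhat_natDeg)
    rw [Lagrange.natDegree_nodal]
    omega
  · simp [Lagrange.eval_nodal, prod_eq_zero hα (sub_self α), hhat_agree α hα]

theorem eq_eval_of_quo1_eq_eval [DecidableEq Fq'] (ι : Fq →+* Fq') (A : Finset Fq')
    (Fill : Fq' → Fq') (f : Fq → Fq') (p hhat : Fq'[X]) {x : Fq} (hx : ι x ∉ A)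
    (hquo : Quo1 ι (fun x => f x - hhat.eval (ι x)) A Fill x = p.eval (ι x)) :
    f x = (p * Lagrange.nodal A id + hhat).eval (ι x) := by
  have hV : ∏ α ∈ A, (ι x - α) ≠ 0 :=
    prod_ne_zero_iff.2 fun α hα => sub_ne_zero.2 fun hxα => hx (hxα ▸ hα)
  rw [Quo1, if_neg hx, div_eq_iff hV] at hquo
  simp only [eval_add, eval_mul, Lagrange.eval_nodal, id, ← hquo]
  ring

end

theorem quo1_soundness_general [Field Fq] [Fintype Fq] [Field Fq'] [DecidableEq Fq']
    (ι : Fq →+* Fq') (A : Finset Fq') (h : Fq' → Fq') (d : ℕ) (hd : A.card ≤ d)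
    (hhat : Polynomial Fq') (hhat_deg : hhat.degree < (A.card : WithBot ℕ))
    (hhat_agree : ∀ α ∈ A, Polynomial.eval α hhat = h α)
    (f : Fq → Fq') (ε : ℝ)
    (hf : ∀ g ∈ RSside ι d A h, agr f g ≤ ε) :
    ∀ Fill : Fq' → Fq', ∀ g ∈ RS ι (d - A.card),
      agr (Quo1 ι (fun x => f x - Polynomial.eval (ι x) hhat) A Fill) g ≤
        ε + (A.card : ℝ) / (Fintype.card Fq : ℝ) := by
  rintro Fill g ⟨p, hp, hg⟩
  have hlift := hf _ (mem_RSside_nodal_mul_add ι A h hd hp hhat_deg hhat_agree)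
  have hbad : (#({x | ι x ∈ A} : Finset Fq) : ℝ) ≤ #A := by
    exact_mod_cast card_filter_mem_le ι A
  calc _ ≤ agr f (fun x => (p * Lagrange.nodal A id + hhat).eval (ι x)) +
          (#({x | ι x ∈ A} : Finset Fq) : ℝ) / Fintype.card Fq := by
        refine agr_le_agr_add_card_div _ _ _ _ _ fun x hx hquo => ?_
        exact eq_eval_of_quo1_eq_eval ι A Fill f p hhat (by simpa using hx) (hquo.trans (hg x))
    _ ≤ ε + (#A : ℝ) / Fintype.card Fq := by gcongr

/-- Univariate quotienting, soundness: if `agr(f, RS_{q'}[d, F_q | h]) ≤ ε` then for every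
`Fill`, `agr(Quo₁(f − h̃, A, Fill), RS_{q'}[d − |A|, F_q]) ≤ ε + |A|/q`. -/
theorem quo1_soundness [Field Fq] [Fintype Fq] [Field Fq'] [Fintype Fq'] [DecidableEq Fq']
    (ι : Fq →+* Fq') (A : Finset Fq') (h : Fq' → Fq') (d : ℕ) (hd : A.card ≤ d)
    (hhat : Polynomial Fq') (hhat_deg : hhat.degree < (A.card : WithBot ℕ))
    (hhat_agree : ∀ α ∈ A, Polynomial.eval α hhat = h α)
    (f : Fq → Fq') (ε : ℝ) (hε : 0 ≤ ε)
    (hf : ∀ g ∈ RSside ι d A h, agr f g ≤ ε) :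
    ∀ Fill : Fq' → Fq', ∀ g ∈ RS ι (d - A.card),
      agr (Quo1 ι (fun x => f x - Polynomial.eval (ι x) hhat) A Fill) g ≤
        ε + (A.card : ℝ) / (Fintype.card Fq : ℝ) :=
  quo1_soundness_general ι A h d hd hhat hhat_deg hhat_agree f ε hf

end Paper
end

section
/- Fix finite fields F_q ⊆ F_{q'} (F_q a subfield of F_{q'}). Let A, B ⊆ F_{q'} be finite sets, let d be an integer with d ≥ |A| and d ≥ |B|, let h : A × B → F_{q'}, let ĥ ∈ F_{q'}[x,y] be the unique polynomial of individual degrees at most (|A|−1, |B|−1) agreeing with h on A × B, and let h̃ = ĥ|_{F_q²}. If f : F_q² → F_{q'} lies in RM_{q'}[(d,d), F_q² | h], then there exist a function g₁ : F_q² → F_{q'} of individual degree at most (d − |A|, d) and Fill : F_q × B → F_{q'} such that the function Quo₂(f − V_A·g₁ − h̃, B, Fill) lies in RM_{q'}[(d, d − |B|), F_q²], where V_A(x) = ∏_{α∈A}(x − α) acts on the first coordinate. -/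
namespace Paper

variable {Fq Fq' : Type*}

/-- `RMind ι d₁ d₂`: functions `F_q² → F_{q'}` of individual degrees at most `(d₁, d₂)`,
i.e. restrictions (along the subfield embedding `ι`) of bivariate polynomials over
`F_{q'}` with `deg_x ≤ d₁` and `deg_y ≤ d₂`. -/
def RMind [Field Fq] [Field Fq'] (ι : Fq →+* Fq') (d1 d2 : ℕ) : Set (Fq × Fq → Fq') :=
  {f | ∃ p : MvPolynomial (Fin 2) Fq', p.degreeOf 0 ≤ d1 ∧ p.degreeOf 1 ≤ d2 ∧
    ∀ x : Fq × Fq, f x = MvPolynomial.eval ![ι x.1, ι x.2] p}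

/-- `RMindSide ι d₁ d₂ A B h`: members of `RMind ι d₁ d₂` whose defining polynomial
additionally takes the value `h a b` at every `(a, b) ∈ A × B`. -/
def RMindSide [Field Fq] [Field Fq'] (ι : Fq →+* Fq') (d1 d2 : ℕ)
    (A B : Finset Fq') (h : Fq' → Fq' → Fq') : Set (Fq × Fq → Fq') :=
  {f | ∃ p : MvPolynomial (Fin 2) Fq', p.degreeOf 0 ≤ d1 ∧ p.degreeOf 1 ≤ d2 ∧
    (∀ a ∈ A, ∀ b ∈ B, MvPolynomial.eval ![a, b] p = h a b) ∧
    ∀ x : Fq × Fq, f x = MvPolynomial.eval ![ι x.1, ι x.2] p}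

/-- The bivariate quotient `Quo₂(g, B, Fill)(x,y) = g(x,y)/V_B(y)` for `y ∉ B`,
and `Fill(x,y)` for `y ∈ B`. -/
noncomputable def Quo2 [Field Fq] [Field Fq'] [DecidableEq Fq'] (ι : Fq →+* Fq')
    (g : Fq × Fq → Fq') (B : Finset Fq') (Fill : Fq → Fq' → Fq') : Fq × Fq → Fq' := fun x =>
  if ι x.2 ∈ B then Fill x.1 (ι x.2) else g x / ∏ β ∈ B, (ι x.2 - β)

/-! Put `P = p - ĥ`, of individual degrees `≤ (d, d)` and vanishing on `A × B`. Dividing by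
`V_B(y)` gives `P = V_B(y) Q + S` with `deg_y S < |B|`; as `V_B` has constant coefficients in `x`,
neither `Q` nor `S` has larger `x`-degree than `P`. For `a ∈ A`, `S(a, ·)` has degree `< |B|` and
vanishes on `B`, so it is zero: `V_A(x)` divides every `y`-coefficient of `S`, say `S = V_A(x) G`.
With `g₁ = G` and the fill `Q` on `F_q × B`, the quotient is `Q`. -/

open Polynomial Polynomial.Bivariate Lagrange
open scoped Polynomial.Bivariate Finset

section Bivariate

variable {R : Type*} [CommRing R]

theorem coeff_equivMvPolynomial (P : R[X][Y]) (m : Fin 2 →₀ ℕ) :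
    (equivMvPolynomial R P).coeff m = (P.coeff (m 1)).coeff (m 0) := by
  induction P using Polynomial.induction_on' with
  | add P Q hP hQ => simp [hP, hQ]
  | monomial n p =>
    induction p using Polynomial.induction_on' with
    | add p q hp hq => simp_all [(monomial n).map_add]
    | monomial k a =>
      have hm : equivMvPolynomial R (monomial n (monomial k a)) =
          MvPolynomial.monomial (Finsupp.single 0 k + Finsupp.single 1 n) a := by
        simp [← C_mul_X_pow_eq_monomial, MvPolynomial.monomial_eq, Finsupp.prod_add_index,
          pow_add, mul_assoc]
      have hsingle : Finsupp.single 0 k + Finsupp.single 1 n = m ↔ k = m 0 ∧ n = m 1 := by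
        constructor
        · rintro rfl; simp
        · rintro ⟨rfl, rfl⟩; ext i; fin_cases i <;> simp
      rw [hm, MvPolynomial.coeff_monomial, coeff_monomial, apply_ite (coeff · (m 0)),
        coeff_monomial, coeff_zero]
      simp only [hsingle]
      split_ifs <;> tauto

theorem degreeOf_zero_equivMvPolynomial_le_iff {P : R[X][Y]} {D : ℕ} :
    (equivMvPolynomial R P).degreeOf 0 ≤ D ↔ ∀ n, (P.coeff n).natDegree ≤ D := by
  simp only [MvPolynomial.degreeOf_le_iff, MvPolynomial.mem_support_iff, coeff_equivMvPolynomial,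
    natDegree_le_iff_coeff_eq_zero]
  constructor
  · intro h n k hk
    by_contra hne
    have := h (Finsupp.single 0 k + Finsupp.single 1 n) (by simpa using hne)
    simp only [Finsupp.add_apply, Finsupp.single_eq_same, Finsupp.single_apply] at this
    omega
  · intro h m hm
    by_contra! hlt
    exact hm (h _ _ hlt)

theorem degreeOf_one_equivMvPolynomial_le_iff {P : R[X][Y]} {D : ℕ} :
    (equivMvPolynomial R P).degreeOf 1 ≤ D ↔ P.natDegree ≤ D := by
  simp only [MvPolynomial.degreeOf_le_iff, MvPolynomial.mem_support_iff, coeff_equivMvPolynomial,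
    natDegree_le_iff_coeff_eq_zero]
  constructor
  · intro h n hn
    by_contra hne
    obtain ⟨k, hk⟩ := Polynomial.ext_iff.not.mp hne |> not_forall.mp
    have := h (Finsupp.single 0 k + Finsupp.single 1 n) (by simpa using hk)
    simp only [Finsupp.add_apply, Finsupp.single_eq_same, Finsupp.single_apply] at this
    omega
  · intro h m hm
    by_contra! hlt
    exact hm (by rw [h _ hlt, coeff_zero])

theorem eval_equivMvPolynomial (a b : R) (P : R[X][Y]) :
    MvPolynomial.eval ![a, b] (equivMvPolynomial R P) = P.evalEval a b := by
  induction P using Polynomial.induction_on' with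
  | add P Q hP hQ => simp [hP, hQ]
  | monomial n p =>
    induction p using Polynomial.induction_on' with
    | add p q hp hq => simp_all [(monomial n).map_add]
    | monomial k c => simp [← C_mul_X_pow_eq_monomial, evalEval_C]

theorem natDegree_coeff_divByMonic_modByMonic_map_C_le {P : R[X][Y]} {D : ℕ}
    (hP : ∀ n, (P.coeff n).natDegree ≤ D) (w : R[X]) (n : ℕ) :
    ((P /ₘ w.map C).coeff n).natDegree ≤ D ∧ ((P %ₘ w.map C).coeff n).natDegree ≤ D := by
  have hP' (i : ℕ) : P.coeff i ∈ degreeLE R D :=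
    mem_degreeLE.mpr (natDegree_le_iff_degree_le.mp (hP i))
  have hone : (1 : R[X]) ∈ degreeLE R D :=
    mem_degreeLE.mpr (degree_one_le.trans (by exact_mod_cast Nat.zero_le D))
  have hw (i : ℕ) : (w.map C).coeff i ∈ (1 : Submodule R R[X]) := by simp [coeff_map]
  have hdiv := coeff_divByMonic_mem_pow_natDegree_mul P (w.map C) _ hP' hone 1 hw
    (Submodule.one_le.mp le_rfl) n
  have hmod := coeff_modByMonic_mem_pow_natDegree_mul P (w.map C) _ hP' hone 1 hw
    (Submodule.one_le.mp le_rfl) n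
  rw [one_pow, one_mul, mem_degreeLE, ← natDegree_le_iff_degree_le] at hdiv hmod
  exact ⟨hdiv, hmod⟩

end Bivariate

section Domain

variable {R : Type*} [CommRing R] [IsDomain R]

theorem nodal_dvd_of_eval_eq_zero {s : Finset R} {p : R[X]} (h : ∀ a ∈ s, p.eval a = 0) :
    nodal s id ∣ p := by
  rw [← modByMonic_eq_zero_iff_dvd nodal_monic]
  refine eq_zero_of_degree_lt_of_eval_finset_eq_zero s ?_ fun a ha => ?_
  · simpa using degree_modByMonic_lt p (nodal_monic (s := s) (v := id))
  · simp [modByMonic_eq_sub_mul_div, h a ha, eval_nodal, Finset.prod_eq_zero ha]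

theorem C_nodal_dvd_of_degree_lt {S : R[X][Y]} {A B : Finset R} (hS : S.degree < #B)
    (hSAB : ∀ a ∈ A, ∀ b ∈ B, S.evalEval a b = 0) : C (nodal A id) ∣ S := by
  refine (C_dvd_iff_dvd_coeff _ _).mpr fun n => nodal_dvd_of_eval_eq_zero fun a ha => ?_
  have hSa : S.map (evalRingHom a) = 0 :=
    eq_zero_of_degree_lt_of_eval_finset_eq_zero B (degree_map_le.trans_lt hS)
      fun b hb => by rw [map_evalRingHom_eval, hSAB a ha b hb]
  simpa using congrArg (coeff · n) hSa

theorem exists_eq_C_nodal_mul_add_map_nodal_mul {P : R[X][Y]} {A B : Finset R} {d : ℕ}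
    (hPy : P.natDegree ≤ d) (hPx : ∀ n, (P.coeff n).natDegree ≤ d)
    (hP : ∀ a ∈ A, ∀ b ∈ B, P.evalEval a b = 0) :
    ∃ G Q : R[X][Y], P = C (nodal A id) * G + (nodal B id).map C * Q ∧
      G.natDegree ≤ d ∧ (∀ n, (G.coeff n).natDegree ≤ d - #A) ∧
      Q.natDegree ≤ d - #B ∧ ∀ n, (Q.coeff n).natDegree ≤ d := by
  have hVB : ((nodal B id).map C).Monic := nodal_monic.map C
  have hVBdeg : ((nodal B id).map C).natDegree = #B := by
    rw [nodal_monic.natDegree_map, natDegree_nodal]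
  set S := P %ₘ (nodal B id).map C
  have hSAB : ∀ a ∈ A, ∀ b ∈ B, S.evalEval a b = 0 := fun a ha b hb => by
    simp [S, modByMonic_eq_sub_mul_div, hP a ha b hb, evalEval_map_C, eval_nodal,
      Finset.prod_eq_zero hb]
  have hSdeg : S.degree < #B := by
    simpa [degree_eq_natDegree hVB.ne_zero, hVBdeg] using degree_modByMonic_lt P hVB
  obtain ⟨G, hG⟩ := C_nodal_dvd_of_degree_lt hSdeg hSAB
  refine ⟨G, P /ₘ (nodal B id).map C, ?_, ?_, fun n => ?_, ?_,
    fun n => (natDegree_coeff_divByMonic_modByMonic_map_C_le hPx _ n).1⟩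
  · rw [← hG]
    exact (modByMonic_add_div P _).symm
  · rw [← natDegree_C_mul (nodal_ne_zero (s := A) (v := id)), ← hG]
    exact natDegree_modByMonic_le_left.trans hPy
  · have hGn : G.coeff n = S.coeff n /ₘ nodal A id := by
      rw [hG, coeff_C_mul, mul_divByMonic_cancel_left _ nodal_monic]
    rw [hGn, natDegree_divByMonic _ nodal_monic, natDegree_nodal]
    exact Nat.sub_le_sub_right (natDegree_coeff_divByMonic_modByMonic_map_C_le hPx _ n).2 _
  · rw [natDegree_divByMonic P hVB, hVBdeg]
    exact Nat.sub_le_sub_right hPy _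

end Domain

theorem evalEval_mem_RMind [Field Fq] [Field Fq'] (ι : Fq →+* Fq') {P : Fq'[X][Y]} {d₁ d₂ : ℕ}
    (hx : ∀ n, (P.coeff n).natDegree ≤ d₁) (hy : P.natDegree ≤ d₂) :
    (fun x : Fq × Fq => P.evalEval (ι x.1) (ι x.2)) ∈ RMind ι d₁ d₂ :=
  ⟨equivMvPolynomial Fq' P, degreeOf_zero_equivMvPolynomial_le_iff.mpr hx,
    degreeOf_one_equivMvPolynomial_le_iff.mpr hy, fun _ => (eval_equivMvPolynomial _ _ P).symm⟩

theorem quo2_eq_of_eq_prod_mul [Field Fq] [Field Fq'] [DecidableEq Fq'] {ι : Fq →+* Fq'}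
    {g q : Fq × Fq → Fq'} {B : Finset Fq'} {Fill : Fq → Fq' → Fq'}
    (hg : ∀ x, ι x.2 ∉ B → g x = (∏ β ∈ B, (ι x.2 - β)) * q x)
    (hFill : ∀ x, ι x.2 ∈ B → Fill x.1 (ι x.2) = q x) :
    Quo2 ι g B Fill = q := by
  ext x
  by_cases hx : ι x.2 ∈ B
  · simp [Quo2, hx, hFill x hx]
  · have hne : ∏ β ∈ B, (ι x.2 - β) ≠ 0 :=
      Finset.prod_ne_zero_iff.mpr fun β hβ => sub_ne_zero.mpr fun e => hx (e ▸ hβ)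
    simp [Quo2, hx, hg x hx, hne]

theorem quo2_completeness_general [Field Fq] [Field Fq'] [DecidableEq Fq']
    (ι : Fq →+* Fq') (A B : Finset Fq') (d : ℕ) (hdA : A.card ≤ d) (hdB : B.card ≤ d)
    (h : Fq' → Fq' → Fq') (hhat : MvPolynomial (Fin 2) Fq')
    (hhat_deg0 : hhat.degreeOf 0 ≤ A.card - 1) (hhat_deg1 : hhat.degreeOf 1 ≤ B.card - 1)
    (hhat_agree : ∀ a ∈ A, ∀ b ∈ B, MvPolynomial.eval ![a, b] hhat = h a b)
    (f : Fq × Fq → Fq') (hf : f ∈ RMindSide ι d d A B h) :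
    ∃ g₁ ∈ RMind ι (d - A.card) d, ∃ Fill : Fq → Fq' → Fq',
      Quo2 ι (fun x => f x - (∏ α ∈ A, (ι x.1 - α)) * g₁ x -
          MvPolynomial.eval ![ι x.1, ι x.2] hhat) B Fill ∈ RMind ι d (d - B.card) := by
  obtain ⟨p, hp0, hp1, hpAB, hpf⟩ := hf
  set P := (equivMvPolynomial Fq').symm (p - hhat)
  have hP : equivMvPolynomial Fq' P = p - hhat := AlgEquiv.apply_symm_apply _ _
  have hPdeg0 : ∀ n, (P.coeff n).natDegree ≤ d := by
    rw [← degreeOf_zero_equivMvPolynomial_le_iff, hP]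
    exact (MvPolynomial.degreeOf_sub_le 0 p hhat).trans (max_le hp0 (by omega))
  have hPdeg1 : P.natDegree ≤ d := by
    rw [← degreeOf_one_equivMvPolynomial_le_iff, hP]
    exact (MvPolynomial.degreeOf_sub_le 1 p hhat).trans (max_le hp1 (by omega))
  have hPAB : ∀ a ∈ A, ∀ b ∈ B, P.evalEval a b = 0 := fun a ha b hb => by
    rw [← eval_equivMvPolynomial, hP, map_sub, hpAB a ha b hb, hhat_agree a ha b hb, sub_self]
  obtain ⟨G, Q, hPGQ, hGy, hGx, hQy, hQx⟩ :=
    exists_eq_C_nodal_mul_add_map_nodal_mul hPdeg1 hPdeg0 hPAB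
  refine ⟨_, evalEval_mem_RMind ι hGx hGy, fun x₁ c => Q.evalEval (ι x₁) c, ?_⟩
  rw [quo2_eq_of_eq_prod_mul (q := fun x => Q.evalEval (ι x.1) (ι x.2)) ?_ fun _ _ => rfl]
  · exact evalEval_mem_RMind ι hQx hQy
  intro x _
  have hPx := congrArg (evalEval (ι x.1) (ι x.2)) hPGQ
  rw [← eval_equivMvPolynomial, hP, map_sub] at hPx
  simp only [evalEval_add, evalEval_mul, evalEval_C, evalEval_map_C, eval_nodal, id] at hPx
  rw [hpf x]
  linear_combination hPx

/-- Bivariate quotienting, completeness: if `f ∈ RM_{q'}[(d,d), F_q² | h]` then there are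
`g₁` of individual degree at most `(d − |A|, d)` and `Fill` such that
`Quo₂(f − V_A·g₁ − h̃, B, Fill)` has individual degree at most `(d, d − |B|)`. -/
theorem quo2_completeness [Field Fq] [Fintype Fq] [Field Fq'] [Fintype Fq'] [DecidableEq Fq']
    (ι : Fq →+* Fq') (A B : Finset Fq') (d : ℕ) (hdA : A.card ≤ d) (hdB : B.card ≤ d)
    (h : Fq' → Fq' → Fq') (hhat : MvPolynomial (Fin 2) Fq')
    (hhat_deg0 : hhat.degreeOf 0 ≤ A.card - 1) (hhat_deg1 : hhat.degreeOf 1 ≤ B.card - 1)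
    (hhat_agree : ∀ a ∈ A, ∀ b ∈ B, MvPolynomial.eval ![a, b] hhat = h a b)
    (f : Fq × Fq → Fq') (hf : f ∈ RMindSide ι d d A B h) :
    ∃ g₁ ∈ RMind ι (d - A.card) d, ∃ Fill : Fq → Fq' → Fq',
      Quo2 ι (fun x => f x - (∏ α ∈ A, (ι x.1 - α)) * g₁ x -
          MvPolynomial.eval ![ι x.1, ι x.2] hhat) B Fill ∈ RMind ι d (d - B.card) :=
  quo2_completeness_general ι A B d hdA hdB h hhat hhat_deg0 hhat_deg1 hhat_agree f hf

end Paper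
end

section
/- Fix finite fields F_q ⊆ F_{q'} (F_q a subfield of F_{q'}). Let A, B ⊆ F_{q'} be finite sets, let d be an integer with d ≥ |A| and d ≥ |B|, let h : A × B → F_{q'}, let ĥ ∈ F_{q'}[x,y] be the unique polynomial of individual degrees at most (|A|−1, |B|−1) agreeing with h on A × B, and let h̃ = ĥ|_{F_q²}. Suppose Q : F_q² → F_{q'} satisfies agr(Q, RM_{q'}[(d,d), F_q² | h]) ≤ ε. Then for every g₁ : F_q² → F_{q'} and every Fill : F_q × B → F_{q'}, setting g₂ = Quo₂(Q − V_A·g₁ − h̃, B, Fill) (with V_A acting on the first coordinate), there do NOT exist functions G₁, G₂ : F_q² → F_{q'} of individual degrees at most (d − |A|, d) and (d, d − |B|) respectively and a set U ⊆ F_q² with |U|/q² > ε + |B|/q such that g₁|_U = G₁|_U and g₂|_U = G₂|_U. -/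
namespace Paper

variable {Fq Fq' : Type*}

/-!
Write `G = V_A(x)·G₁ + V_B(y)·G₂ + h̃`. It has individual degrees at most `(d, d)`, and since
`V_A` and `V_B` vanish on `A × B` it agrees with `h` there, so `G ∈ RM[(d,d), F_q² | h]`.
At a point of `U` whose second coordinate is outside `B`, clearing the denominator `V_B(y)` in
`Quo₂` gives `Q = V_A·g₁ + V_B·G₂ + h̃ = G`. At most `q·|B|` points of `F_q²` have second
coordinate in `B`, so `agr(Q, G) ≥ |U|/q² − |B|/q > ε`.
-/

open MvPolynomial

section Degrees

variable {σ R : Type*}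

lemma degreeOf_mul_le_of_le [CommSemiring R] {p q : MvPolynomial σ R} {i : σ} {a b : ℕ}
    (hp : p.degreeOf i ≤ a) (hq : q.degreeOf i ≤ b) : (p * q).degreeOf i ≤ a + b :=
  (degreeOf_mul_le i p q).trans (add_le_add hp hq)

variable [CommRing R]

lemma degreeOf_prod_X_sub_C_self_le [Nontrivial R] (i : σ) (A : Finset R) :
    (∏ α ∈ A, (X i - C α) : MvPolynomial σ R).degreeOf i ≤ A.card := by
  classical
  refine (degreeOf_prod_le _ _ _).trans ?_
  calc ∑ α ∈ A, (X i - C α : MvPolynomial σ R).degreeOf i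
      ≤ ∑ _α ∈ A, 1 := Finset.sum_le_sum fun α _ =>
        (degreeOf_sub_le _ _ _).trans (by simp [degreeOf_C])
    _ = A.card := by simp

lemma degreeOf_prod_X_sub_C_of_ne {i j : σ} (hij : i ≠ j) (A : Finset R) :
    (∏ α ∈ A, (X j - C α) : MvPolynomial σ R).degreeOf i = 0 := by
  refine Nat.eq_zero_of_le_zero ((degreeOf_prod_le _ _ _).trans ?_)
  refine (Finset.sum_le_sum fun α _ => (degreeOf_sub_le i (X j) (C α))).trans ?_
  simp [degreeOf_X_of_ne hij, degreeOf_C]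

lemma eval_prod_X_sub_C (v : σ → R) (j : σ) (A : Finset R) :
    eval v (∏ α ∈ A, (X j - C α)) = ∏ α ∈ A, (v j - α) := by
  simp [map_prod]

end Degrees

section Codewords

variable [Field Fq] [Field Fq']

lemma vanishing_combination_mem_RMindSide {ι : Fq →+* Fq'} {A B : Finset Fq'} {d : ℕ}
    (hdA : A.card ≤ d) (hdB : B.card ≤ d) {h : Fq' → Fq' → Fq'}
    {hhat : MvPolynomial (Fin 2) Fq'} (hhat_deg0 : hhat.degreeOf 0 ≤ d)
    (hhat_deg1 : hhat.degreeOf 1 ≤ d)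
    (hhat_agree : ∀ a ∈ A, ∀ b ∈ B, eval ![a, b] hhat = h a b)
    {G₁ G₂ : Fq × Fq → Fq'} (hG₁ : G₁ ∈ RMind ι (d - A.card) d)
    (hG₂ : G₂ ∈ RMind ι d (d - B.card)) :
    (fun x => (∏ α ∈ A, (ι x.1 - α)) * G₁ x + (∏ β ∈ B, (ι x.2 - β)) * G₂ x +
      eval ![ι x.1, ι x.2] hhat) ∈ RMindSide ι d d A B h := by
  obtain ⟨P₁, hP₁0, hP₁1, hP₁⟩ := hG₁
  obtain ⟨P₂, hP₂0, hP₂1, hP₂⟩ := hG₂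
  set VA : MvPolynomial (Fin 2) Fq' := ∏ α ∈ A, (X 0 - C α)
  set VB : MvPolynomial (Fin 2) Fq' := ∏ β ∈ B, (X 1 - C β)
  have hdeg : ∀ i, (VA * P₁).degreeOf i ≤ d → (VB * P₂).degreeOf i ≤ d →
      hhat.degreeOf i ≤ d → (VA * P₁ + VB * P₂ + hhat).degreeOf i ≤ d := fun i h₁ h₂ h₃ =>
    (degreeOf_add_le _ _ _).trans (max_le ((degreeOf_add_le _ _ _).trans (max_le h₁ h₂)) h₃)
  refine ⟨VA * P₁ + VB * P₂ + hhat, hdeg 0 ?_ ?_ hhat_deg0, hdeg 1 ?_ ?_ hhat_deg1, ?_, ?_⟩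
  · exact (degreeOf_mul_le_of_le (degreeOf_prod_X_sub_C_self_le 0 A) hP₁0).trans_eq
      (Nat.add_sub_cancel' hdA)
  · exact (degreeOf_mul_le_of_le (degreeOf_prod_X_sub_C_of_ne (by decide) B).le hP₂0).trans_eq
      (zero_add d)
  · exact (degreeOf_mul_le_of_le (degreeOf_prod_X_sub_C_of_ne (by decide) A).le hP₁1).trans_eq
      (zero_add d)
  · exact (degreeOf_mul_le_of_le (degreeOf_prod_X_sub_C_self_le 1 B) hP₂1).trans_eq
      (Nat.add_sub_cancel' hdB)
  · intro a ha b hb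
    have hVA : eval ![a, b] VA = 0 := by
      rw [eval_prod_X_sub_C]; exact Finset.prod_eq_zero ha (by simp)
    have hVB : eval ![a, b] VB = 0 := by
      rw [eval_prod_X_sub_C]; exact Finset.prod_eq_zero hb (by simp)
    simp [hVA, hVB, hhat_agree a ha b hb]
  · intro x
    simp [VA, VB, hP₁ x, hP₂ x]

lemma Quo2_eq_iff_of_notMem [DecidableEq Fq'] {ι : Fq →+* Fq'} {g : Fq × Fq → Fq'}
    {B : Finset Fq'} {Fill : Fq → Fq' → Fq'} {x : Fq × Fq} (hx : ι x.2 ∉ B) {c : Fq'} :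
    Quo2 ι g B Fill x = c ↔ g x = (∏ β ∈ B, (ι x.2 - β)) * c := by
  have hV : ∏ β ∈ B, (ι x.2 - β) ≠ 0 :=
    Finset.prod_ne_zero_iff.2 fun β hβ hxβ => hx (sub_eq_zero.1 hxβ ▸ hβ)
  rw [Quo2, if_neg hx, div_eq_iff hV, mul_comm]

end Codewords

section Counting

lemma card_div_le_agr {U V : Type*} [Fintype U] {f g : U → V} {S : Finset U}
    (hS : ∀ x ∈ S, f x = g x) : (S.card : ℝ) / Fintype.card U ≤ agr f g := by
  classical
  rw [agr, Nat.card_eq_fintype_card, Fintype.card_subtype]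
  gcongr
  exact fun x hx => Finset.mem_filter.2 ⟨Finset.mem_univ x, hS x hx⟩

lemma card_filter_snd_mem_le {α γ β : Type*} [Fintype α] [DecidableEq β] {f : γ → β}
    (hf : Function.Injective f) (U : Finset (α × γ)) (B : Finset β) :
    (U.filter fun x => f x.2 ∈ B).card ≤ Fintype.card α * B.card := by
  have hsub : U.filter (fun x => f x.2 ∈ B) ⊆ Finset.univ ×ˢ B.preimage f hf.injOn := by
    intro x hx
    simpa using (Finset.mem_filter.1 hx).2
  refine (Finset.card_le_card hsub).trans ?_
  rw [Finset.card_product, Finset.card_univ]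
  exact Nat.mul_le_mul_left _
    (Finset.card_le_card_of_injOn f (fun y hy => Finset.mem_preimage.1 hy) hf.injOn)

lemma card_div_sub_le_agr {α β V : Type*} [Fintype α] [Nonempty α] [DecidableEq β] {f : α → β}
    (hf : Function.Injective f) {Q g : α × α → V} {U : Finset (α × α)} {B : Finset β}
    (hU : ∀ x ∈ U, f x.2 ∉ B → Q x = g x) :
    (U.card : ℝ) / (Fintype.card α : ℝ) ^ 2 - (B.card : ℝ) / Fintype.card α ≤ agr Q g := by
  have hq : (0 : ℝ) < Fintype.card α := by exact_mod_cast Fintype.card_pos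
  have hsplit : ((U.filter fun x => f x.2 ∈ B).card : ℝ) + (U.filter fun x => f x.2 ∉ B).card =
      U.card := by exact_mod_cast Finset.card_filter_add_card_filter_not _
  have hbad : ((U.filter fun x => f x.2 ∈ B).card : ℝ) ≤ Fintype.card α * B.card := by
    exact_mod_cast card_filter_snd_mem_le hf U B
  have hgood := card_div_le_agr (S := U.filter fun x => f x.2 ∉ B) (f := Q) (g := g)
    fun x hx => hU x (Finset.mem_filter.1 hx).1 (Finset.mem_filter.1 hx).2
  rw [Fintype.card_prod, Nat.cast_mul, ← sq] at hgood
  calc (U.card : ℝ) / (Fintype.card α : ℝ) ^ 2 - B.card / Fintype.card α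
      = (U.card - Fintype.card α * B.card) / (Fintype.card α : ℝ) ^ 2 := by
        field_simp
    _ ≤ _ := by
      refine le_trans ?_ hgood
      gcongr
      linarith

end Counting

theorem quo2_soundness_general [Field Fq] [Fintype Fq] [Field Fq'] [DecidableEq Fq']
    (ι : Fq →+* Fq') (A B : Finset Fq') (d : ℕ) (hdA : A.card ≤ d) (hdB : B.card ≤ d)
    (h : Fq' → Fq' → Fq') (hhat : MvPolynomial (Fin 2) Fq')
    (hhat_deg0 : hhat.degreeOf 0 ≤ A.card - 1) (hhat_deg1 : hhat.degreeOf 1 ≤ B.card - 1)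
    (hhat_agree : ∀ a ∈ A, ∀ b ∈ B, MvPolynomial.eval ![a, b] hhat = h a b)
    (Q : Fq × Fq → Fq') (ε : ℝ)
    (hQ : ∀ g ∈ RMindSide ι d d A B h, agr Q g ≤ ε) :
    ∀ (g₁ : Fq × Fq → Fq') (Fill : Fq → Fq' → Fq'),
      ¬ ∃ (G₁ G₂ : Fq × Fq → Fq') (U : Finset (Fq × Fq)),
        G₁ ∈ RMind ι (d - A.card) d ∧ G₂ ∈ RMind ι d (d - B.card) ∧
        ε + (B.card : ℝ) / (Fintype.card Fq : ℝ) <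
          (U.card : ℝ) / (Fintype.card Fq : ℝ) ^ 2 ∧
        (∀ x ∈ U, g₁ x = G₁ x) ∧
        ∀ x ∈ U,
          Quo2 ι (fun y => Q y - (∏ α ∈ A, (ι y.1 - α)) * g₁ y -
            MvPolynomial.eval ![ι y.1, ι y.2] hhat) B Fill x = G₂ x := by
  rintro g₁ Fill ⟨G₁, G₂, U, hG₁, hG₂, hU, hg₁, hg₂⟩
  have hg := vanishing_combination_mem_RMindSide hdA hdB (hhat_deg0.trans (by omega))
    (hhat_deg1.trans (by omega)) hhat_agree hG₁ hG₂
  have hagree : ∀ x ∈ U, ι x.2 ∉ B → Q x = (∏ α ∈ A, (ι x.1 - α)) * G₁ x +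
      (∏ β ∈ B, (ι x.2 - β)) * G₂ x + eval ![ι x.1, ι x.2] hhat := by
    intro x hx hxB
    have hQx := (Quo2_eq_iff_of_notMem hxB).1 (hg₂ x hx)
    rw [← hg₁ x hx]
    linear_combination hQx
  linarith [hQ _ hg, card_div_sub_le_agr ι.injective hagree]

/-- Bivariate quotienting, soundness: if `agr(Q, RM_{q'}[(d,d), F_q² | h]) ≤ ε`, then for
all `g₁` and `Fill`, with `g₂ = Quo₂(Q − V_A·g₁ − h̃, B, Fill)`, the pair `(g₁, g₂)` cannot
have correlated agreement on a set of fractional size greater than `ε + |B|/q` with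
functions of individual degrees `(d − |A|, d)` and `(d, d − |B|)` respectively. -/
theorem quo2_soundness [Field Fq] [Fintype Fq] [Field Fq'] [Fintype Fq'] [DecidableEq Fq']
    (ι : Fq →+* Fq') (A B : Finset Fq') (d : ℕ) (hdA : A.card ≤ d) (hdB : B.card ≤ d)
    (h : Fq' → Fq' → Fq') (hhat : MvPolynomial (Fin 2) Fq')
    (hhat_deg0 : hhat.degreeOf 0 ≤ A.card - 1) (hhat_deg1 : hhat.degreeOf 1 ≤ B.card - 1)
    (hhat_agree : ∀ a ∈ A, ∀ b ∈ B, MvPolynomial.eval ![a, b] hhat = h a b)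
    (Q : Fq × Fq → Fq') (ε : ℝ) (hε : 0 ≤ ε)
    (hQ : ∀ g ∈ RMindSide ι d d A B h, agr Q g ≤ ε) :
    ∀ (g₁ : Fq × Fq → Fq') (Fill : Fq → Fq' → Fq'),
      ¬ ∃ (G₁ G₂ : Fq × Fq → Fq') (U : Finset (Fq × Fq)),
        G₁ ∈ RMind ι (d - A.card) d ∧ G₂ ∈ RMind ι d (d - B.card) ∧
        ε + (B.card : ℝ) / (Fintype.card Fq : ℝ) <
          (U.card : ℝ) / (Fintype.card Fq : ℝ) ^ 2 ∧
        (∀ x ∈ U, g₁ x = G₁ x) ∧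
        ∀ x ∈ U,
          Quo2 ι (fun y => Q y - (∏ α ∈ A, (ι y.1 - α)) * g₁ y -
            MvPolynomial.eval ![ι y.1, ι y.2] hhat) B Fill x = G₂ x :=
  quo2_soundness_general ι A B d hdA hdB h hhat hhat_deg0 hhat_deg1 hhat_agree Q ε hQ

end Paper
end
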